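/- arXiv:1308.0514 — 3 statements merged into one kernel-verified Lean document; each statement's English description precedes it below -/
import Mathlib

section
/- A safe copy migration is order-independent: fix a data store state ds, a source kind c₁, a target kind c₂, a property name n, and property names a and b defining the join condition (a source entity e matches a target entity f iff the value of property a in e equals the value of property b in f, both being defined). Suppose the copy operation is safe on ds, i.e., for every entity f of kind c₂, all entities e of kind c₁ that match f and have property n defined assign the same value to property n. Then for every enumeration (list ordering) of the matching source–target pairs, performing the corresponding sequence of create-or-replace updates of property n in the target entities yields the same final data store state, namely the state in which every target entity f of kind c₂ with at least one matching source entity has property n set to the common value of property n over its matching source entities, and all other entities are unchanged. -/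
/-!
Each update step maps every entity of the state independently, so running a list of steps on
a state is the image of running them on each entity separately. For a fixed target entity `p`,
a step either leaves `p` alone (another target, or a source without property `n`) or sets its
property `n` to the value `w` of a matching source; by safety all such `w` coincide, and an
entity already carrying `n = w` is fixed by every step. Hence the run on `p` ends at `p` with
`n := w` as soon as one matching source defining `n` is enumerated, and at `p` otherwise,
whatever the order.
-/

namespace List

variable {α β : Type*}

theorem foldl_image_eq_image_foldl [DecidableEq α] (f : α → β → α) (l : List β)
    (s : Finset α) : l.foldl (fun s b => s.image (f · b)) s = s.image (l.foldl f) := by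
  induction l generalizing s with
  | nil => simp
  | cons b l ih => rw [foldl_cons, ih, Finset.image_image]; rfl

theorem foldl_eq_self_of_forall_mem {f : α → β → α} {a : α} {l : List β}
    (h : ∀ b ∈ l, f a b = a) : l.foldl f a = a := by
  induction l with
  | nil => rfl
  | cons b l ih =>
    rw [foldl_cons, h b mem_cons_self, ih fun b hb => h b (mem_cons_of_mem _ hb)]

theorem foldl_eq_of_exists_mem_of_absorbing {f : α → β → α} {x y : α} {l : List β}
    (hx : ∀ b ∈ l, f x b = x ∨ f x b = y) (hy : ∀ b ∈ l, f y b = y)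
    (hit : ∃ b ∈ l, f x b = y) : l.foldl f x = y := by
  induction l with
  | nil => simp at hit
  | cons b l ih =>
    have hx' := fun b hb => hx b (mem_cons_of_mem _ hb)
    have hy' := fun b hb => hy b (mem_cons_of_mem _ hb)
    rw [foldl_cons]
    rcases hx b mem_cons_self with hb | hb
    · rw [hb]
      obtain ⟨c, hc, hcy⟩ := hit
      rcases mem_cons.1 hc with rfl | hc
      · rw [hb] at hcy; rw [hcy, foldl_eq_self_of_forall_mem hy']
      · exact ih hx' hy' ⟨c, hc, hcy⟩
    · rw [hb, foldl_eq_self_of_forall_mem hy']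

end List

namespace CopyMigration

variable {Kind Id PName PVal : Type}

abbrev Entity (Kind Id PName PVal : Type) := (Kind × Id) × Finmap (fun _ : PName => PVal)

variable {ds : Finset (Entity Kind Id PName PVal)}
  {MP : Entity Kind Id PName PVal × Entity Kind Id PName PVal → Prop}
  {p : Entity Kind Id PName PVal} {q : Entity Kind Id PName PVal × Entity Kind Id PName PVal}
  {l : List (Entity Kind Id PName PVal × Entity Kind Id PName PVal)}

theorem matches_of_key_eq (hds : ∀ p ∈ ds, ∀ q ∈ ds, p.1 = q.1 → p = q)
    (hMPds : ∀ q, MP q → q.2 ∈ ds) (hq : MP q) (hp : p ∈ ds) (hkey : p.1 = q.2.1) :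
    MP (q.1, p) := by
  rwa [hds p hp q.2 (hMPds q hq) hkey]

variable [DecidableEq Kind] [DecidableEq Id] [DecidableEq PName] {n : PName}

/-- The update performed for the matching pair `q = (e, f)`, seen from an entity `p`. -/
def copyProp (n : PName) (p : Entity Kind Id PName PVal)
    (q : Entity Kind Id PName PVal × Entity Kind Id PName PVal) : Entity Kind Id PName PVal :=
  if p.1 = q.2.1 then (p.1, (q.1.2.lookup n).elim p.2 (fun w => p.2.insert n w)) else p

theorem copyProp_of_ne (h : p.1 ≠ q.2.1) : copyProp n p q = p := if_neg h

theorem copyProp_of_lookup_none (h : q.1.2.lookup n = none) : copyProp n p q = p := by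
  simp [copyProp, h]

theorem copyProp_of_lookup_some {w : PVal} (hp : p.1 = q.2.1) (h : q.1.2.lookup n = some w) :
    copyProp n p q = (p.1, p.2.insert n w) := by
  simp [copyProp, hp, h]

theorem copyProp_insert_of_lookup_some {w : PVal} (h : q.1.2.lookup n = some w) :
    copyProp n (p.1, p.2.insert n w) q = (p.1, p.2.insert n w) := by
  by_cases hp : p.1 = q.2.1
  · rw [copyProp_of_lookup_some (p := (p.1, p.2.insert n w)) hp h, Finmap.insert_insert]
  · exact copyProp_of_ne hp

theorem foldl_copyProp_of_forall_lookup_none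
    (h : ∀ q ∈ l, p.1 = q.2.1 → q.1.2.lookup n = none) : l.foldl (copyProp n) p = p :=
  List.foldl_eq_self_of_forall_mem fun q hq => by
    by_cases hp : p.1 = q.2.1
    · exact copyProp_of_lookup_none (h q hq hp)
    · exact copyProp_of_ne hp

theorem foldl_copyProp_of_agree {w : PVal}
    (hagree : ∀ q ∈ l, p.1 = q.2.1 → ∀ v, q.1.2.lookup n = some v → v = w)
    (hit : ∃ q ∈ l, p.1 = q.2.1 ∧ q.1.2.lookup n = some w) :
    l.foldl (copyProp n) p = (p.1, p.2.insert n w) := by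
  refine List.foldl_eq_of_exists_mem_of_absorbing (fun q hq => ?_) (fun q hq => ?_) ?_
  · rcases hv : q.1.2.lookup n with _ | v
    · exact .inl (copyProp_of_lookup_none hv)
    by_cases hp : p.1 = q.2.1
    · rw [hagree q hq hp v hv] at hv
      exact .inr (copyProp_of_lookup_some hp hv)
    · exact .inl (copyProp_of_ne hp)
  · rcases hv : q.1.2.lookup n with _ | v
    · exact copyProp_of_lookup_none hv
    by_cases hp : p.1 = q.2.1
    · rw [hagree q hq hp v hv] at hv
      exact copyProp_insert_of_lookup_some hv
    · exact copyProp_of_ne hp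
  · obtain ⟨q, hq, hp, hw⟩ := hit
    exact ⟨q, hq, copyProp_of_lookup_some hp hw⟩

theorem foldl_copyProp_of_matches (hds : ∀ p ∈ ds, ∀ q ∈ ds, p.1 = q.1 → p = q)
    (hMPds : ∀ q, MP q → q.2 ∈ ds)
    (hsafe : ∀ e₁ e₂ f, MP (e₁, f) → MP (e₂, f) →
      ∀ w₁ w₂, e₁.2.lookup n = some w₁ → e₂.2.lookup n = some w₂ → w₁ = w₂)
    (hl : ∀ q ∈ l, MP q) (hp : p ∈ ds) {e : Entity Kind Id PName PVal} {w : PVal}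
    (he : (e, p) ∈ l) (hw : e.2.lookup n = some w) :
    l.foldl (copyProp n) p = (p.1, p.2.insert n w) :=
  foldl_copyProp_of_agree
    (fun q hq hkey v hv =>
      hsafe q.1 e p (matches_of_key_eq hds hMPds (hl q hq) hp hkey) (hl _ he) v w hv hw)
    ⟨(e, p), he, rfl, hw⟩

theorem foldl_copyProp_of_not_exists_matches (hds : ∀ p ∈ ds, ∀ q ∈ ds, p.1 = q.1 → p = q)
    (hMPds : ∀ q, MP q → q.2 ∈ ds) (hl : ∀ q ∈ l, MP q) (hp : p ∈ ds)
    (hno : ¬ ∃ e w, MP (e, p) ∧ e.2.lookup n = some w) :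
    l.foldl (copyProp n) p = p :=
  foldl_copyProp_of_forall_lookup_none fun q hq hkey =>
    Option.eq_none_iff_forall_ne_some.2 fun w hw =>
      hno ⟨q.1, w, matches_of_key_eq hds hMPds (hl q hq) hp hkey, hw⟩

end CopyMigration

open CopyMigration

theorem safe_copy_order_independent
    {Kind Id PName PVal : Type}
    [DecidableEq Kind] [DecidableEq Id] [DecidableEq PName] [DecidableEq PVal]
    (ds : Finset ((Kind × Id) × Finmap (fun _ : PName => PVal)))
    (hds : ∀ p ∈ ds, ∀ q ∈ ds, p.1 = q.1 → p = q)
    (c₁ c₂ : Kind) (n a b : PName)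
    (MP : ((Kind × Id) × Finmap (fun _ : PName => PVal)) ×
          ((Kind × Id) × Finmap (fun _ : PName => PVal)) → Prop)
    (hMP : ∀ q, MP q ↔
      q.1 ∈ ds ∧ q.2 ∈ ds ∧ q.1.1.1 = c₁ ∧ q.2.1.1 = c₂ ∧
      ∃ w, q.1.2.lookup a = some w ∧ q.2.2.lookup b = some w)
    (step : Finset ((Kind × Id) × Finmap (fun _ : PName => PVal)) →
            ((Kind × Id) × Finmap (fun _ : PName => PVal)) ×
            ((Kind × Id) × Finmap (fun _ : PName => PVal)) →
            Finset ((Kind × Id) × Finmap (fun _ : PName => PVal)))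
    (hstep : ∀ s q, step s q = s.image (fun p =>
      if p.1 = q.2.1
      then (p.1, (q.1.2.lookup n).elim p.2 (fun w => p.2.insert n w))
      else p))
    (hsafe : ∀ e₁ e₂ f, MP (e₁, f) → MP (e₂, f) →
      ∀ w₁ w₂, e₁.2.lookup n = some w₁ → e₂.2.lookup n = some w₂ →
      w₁ = w₂) :
    (∀ l₁ l₂ : List (((Kind × Id) × Finmap (fun _ : PName => PVal)) ×
                     ((Kind × Id) × Finmap (fun _ : PName => PVal))),
      l₁.Nodup → l₂.Nodup →
      (∀ q, q ∈ l₁ ↔ MP q) → (∀ q, q ∈ l₂ ↔ MP q) →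
      l₁.foldl step ds = l₂.foldl step ds) ∧
    (∀ l : List (((Kind × Id) × Finmap (fun _ : PName => PVal)) ×
                 ((Kind × Id) × Finmap (fun _ : PName => PVal))),
      l.Nodup → (∀ q, q ∈ l ↔ MP q) →
      ∀ p ∈ ds,
        (∀ w, (∃ e, MP (e, p) ∧ e.2.lookup n = some w) →
          (p.1, p.2.insert n w) ∈ l.foldl step ds) ∧
        ((¬ ∃ e w, MP (e, p) ∧ e.2.lookup n = some w) →
          p ∈ l.foldl step ds)) := by
  have hMPds : ∀ q, MP q → q.2 ∈ ds := fun q hq => ((hMP q).1 hq).2.1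
  have hrun : ∀ l : List (Entity Kind Id PName PVal × Entity Kind Id PName PVal),
      l.foldl step ds = ds.image (l.foldl (copyProp n)) := fun l => by
    rw [show step = fun s q => s.image (copyProp n · q) from funext₂ hstep]
    exact List.foldl_image_eq_image_foldl _ l ds
  have hit : ∀ l : List (Entity Kind Id PName PVal × Entity Kind Id PName PVal),
      (∀ q, q ∈ l ↔ MP q) → ∀ p ∈ ds, ∀ e w, MP (e, p) → e.2.lookup n = some w →
      l.foldl (copyProp n) p = (p.1, p.2.insert n w) := fun _ hl _ hp _ _ he hw =>
    foldl_copyProp_of_matches hds hMPds hsafe (fun q => (hl q).1) hp ((hl _).2 he) hw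
  have hmiss : ∀ l : List (Entity Kind Id PName PVal × Entity Kind Id PName PVal),
      (∀ q, q ∈ l ↔ MP q) → ∀ p ∈ ds, (¬ ∃ e w, MP (e, p) ∧ e.2.lookup n = some w) →
      l.foldl (copyProp n) p = p := fun _ hl _ hp hno =>
    foldl_copyProp_of_not_exists_matches hds hMPds (fun q => (hl q).1) hp hno
  refine ⟨fun l₁ l₂ _ _ h₁ h₂ => ?_, fun l _ hl p hp => ⟨?_, fun hno => ?_⟩⟩
  · rw [hrun, hrun]
    refine Finset.image_congr fun p hp => ?_
    by_cases h : ∃ e w, MP (e, p) ∧ e.2.lookup n = some w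
    · obtain ⟨e, w, he, hw⟩ := h
      rw [hit l₁ h₁ p hp e w he hw, hit l₂ h₂ p hp e w he hw]
    · rw [hmiss l₁ h₁ p hp h, hmiss l₂ h₂ p hp h]
  · rintro w ⟨e, he, hw⟩
    rw [hrun, ← hit l hl p hp e w he hw]
    exact Finset.mem_image_of_mem _ hp
  · rw [hrun, ← hmiss l hl p hp hno]
    exact Finset.mem_image_of_mem _ hp
end

section
/- An unsafe copy migration can be order-dependent: there exist a data store state ds, a source kind c₁, a target kind c₂, a property name n, and two enumerations (list orderings) of the pairs consisting of a source entity of kind c₁ and a target entity of kind c₂ (i.e., the copy is specified as a cross product without any join restriction), such that performing the corresponding sequences of create-or-replace updates — setting property n of the target entity to the value of property n in the source entity — yields two different final data store states. -/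
/-!
Copying property `n` from two sources holding different values of `n` into one target is a
pair of writes to the same cell, so the last write wins: the two orders leave different values
of `n` in the target.
-/

namespace DataStore

variable {K P V : Type*} [DecidableEq K] [DecidableEq P] [DecidableEq V]

/-- The elementary update for the pair `q = (source, target)`; the theorem's folds unfold to
iterates of exactly this map. -/
def copyProp (n : P) (s : Finset (K × Finmap fun _ : P => V))
    (q : (K × Finmap fun _ : P => V) × (K × Finmap fun _ : P => V)) :
    Finset (K × Finmap fun _ : P => V) :=
  s.image fun p =>
    if p.1 = q.2.1 then (p.1, (q.1.2.lookup n).elim p.2 fun w => p.2.insert n w) else p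

theorem image_fst_copyProp (n : P) (s : Finset (K × Finmap fun _ : P => V))
    (q : (K × Finmap fun _ : P => V) × (K × Finmap fun _ : P => V)) :
    (copyProp n s q).image Prod.fst = s.image Prod.fst := by
  rw [copyProp, Finset.image_image]
  congr 1
  funext p
  simp only [Function.comp_apply]
  split_ifs <;> rfl

theorem lookup_of_mem_copyProp {n : P} {s : Finset (K × Finmap fun _ : P => V)}
    {a t p : K × Finmap fun _ : P => V} {v : V} (ha : a.2.lookup n = some v)
    (hp : p ∈ copyProp n s (a, t)) (hpt : p.1 = t.1) : p.2.lookup n = some v := by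
  obtain ⟨p₀, -, rfl⟩ := Finset.mem_image.mp hp
  by_cases h : p₀.1 = t.1
  · simp [h, ha]
  · simp [h] at hpt

theorem copyProp_copyProp_ne_of_lookup_ne {n : P} {s : Finset (K × Finmap fun _ : P => V)}
    {a b t : K × Finmap fun _ : P => V} {va vb : V} (ha : a.2.lookup n = some va)
    (hb : b.2.lookup n = some vb) (hab : va ≠ vb) (ht : t.1 ∈ s.image Prod.fst) :
    copyProp n (copyProp n s (a, t)) (b, t) ≠ copyProp n (copyProp n s (b, t)) (a, t) := by
  intro heq
  rw [← image_fst_copyProp n s (a, t), ← image_fst_copyProp n _ (b, t)] at ht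
  obtain ⟨p, hp, hpt⟩ := Finset.mem_image.mp ht
  have hvb := lookup_of_mem_copyProp hb hp hpt
  have hva := lookup_of_mem_copyProp ha (heq ▸ hp) hpt
  exact hab (Option.some_injective _ (hva.symm.trans hvb))

end DataStore

open DataStore

theorem unsafe_copy_order_dependent :
    ∃ (ds : Finset ((ℕ × ℕ) × Finmap (fun _ : ℕ => ℕ)))
      (c₁ c₂ n : ℕ)
      (l₁ l₂ : List (((ℕ × ℕ) × Finmap (fun _ : ℕ => ℕ)) ×
                     ((ℕ × ℕ) × Finmap (fun _ : ℕ => ℕ)))),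
      (∀ p ∈ ds, ∀ q ∈ ds, p.1 = q.1 → p = q) ∧
      l₁.Nodup ∧ l₂.Nodup ∧
      (∀ q, q ∈ l₁ ↔
        (q.1 ∈ ds ∧ q.2 ∈ ds ∧ q.1.1.1 = c₁ ∧ q.2.1.1 = c₂)) ∧
      (∀ q, q ∈ l₂ ↔
        (q.1 ∈ ds ∧ q.2 ∈ ds ∧ q.1.1.1 = c₁ ∧ q.2.1.1 = c₂)) ∧
      l₁.foldl (fun s q => s.image (fun p =>
          if p.1 = q.2.1
          then (p.1, (q.1.2.lookup n).elim p.2 (fun w => p.2.insert n w))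
          else p)) ds ≠
      l₂.foldl (fun s q => s.image (fun p =>
          if p.1 = q.2.1
          then (p.1, (q.1.2.lookup n).elim p.2 (fun w => p.2.insert n w))
          else p)) ds := by
  let a : (ℕ × ℕ) × Finmap (fun _ : ℕ => ℕ) := ((0, 0), Finmap.singleton 0 1)
  let b : (ℕ × ℕ) × Finmap (fun _ : ℕ => ℕ) := ((0, 1), Finmap.singleton 0 2)
  let t : (ℕ × ℕ) × Finmap (fun _ : ℕ => ℕ) := ((1, 0), ∅)
  have cross_product (q : ((ℕ × ℕ) × Finmap (fun _ : ℕ => ℕ)) ×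
      ((ℕ × ℕ) × Finmap (fun _ : ℕ => ℕ))) :
      q ∈ [(a, t), (b, t)] ↔ q.1 ∈ ({a, b, t} : Finset _) ∧ q.2 ∈ ({a, b, t} : Finset _) ∧
        q.1.1.1 = 0 ∧ q.2.1.1 = 1 := by
    obtain ⟨q₁, q₂⟩ := q
    simp only [List.mem_cons, List.not_mem_nil, or_false, Prod.mk.injEq,
      Finset.mem_insert, Finset.mem_singleton]
    constructor
    · rintro (⟨rfl, rfl⟩ | ⟨rfl, rfl⟩) <;> simp [a, b, t]
    · rintro ⟨rfl | rfl | rfl, rfl | rfl | rfl, h₁, h₂⟩ <;> simp_all [a, b, t]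
  refine ⟨{a, b, t}, 0, 1, 0, [(a, t), (b, t)], [(b, t), (a, t)], by decide, by decide,
    by decide, cross_product, fun q => (List.Perm.swap _ _ []).mem_iff.trans (cross_product q), ?_⟩
  exact copyProp_copyProp_ne_of_lookup_ne (va := 1) (vb := 2) rfl rfl (by decide) (by decide)
end

section
/- Version-guarded add migrations recover correctly from interruption: fix an entity kind c, a property name n, a property value v, a distinguished property name 'version' whose values are natural numbers, and a version number k. The guarded add migration replaces each binding (κ ↦ π) whose key κ has kind c and whose value π assigns version k by (κ ↦ π′), where π′ is π with property n set to v and property 'version' set to k+1 (both create-or-replace), and leaves all other bindings unchanged. Then for every data store state ds and every intermediate state ds′ obtained from ds by applying this per-entity update to an arbitrary subset of the qualifying entities of ds (an interrupted run), applying the full guarded add migration to ds′ yields the same data store state as applying the full guarded add migration directly to ds. In particular, the guarded add migration is idempotent. -/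
/-!
The per-entity step `p ↦ if p qualifies then upd p else p` is idempotent: `upd` only performs
create-or-replace writes, so applying it twice is applying it once, whether or not the updated
entity still qualifies (the version embedding `ι` need not be injective). Hence the migration,
the image of the store under this step, absorbs both its own output and any entity that an
interrupted run already updated, since such an entity is the step's image of a qualifying one.
-/

theorem Finmap.insert_insert_insert_insert {α : Type*} {β : α → Type*} [DecidableEq α]
    (s : Finmap β) (a b : α) (x : β a) (y : β b) :
    (((s.insert a x).insert b y).insert a x).insert b y = (s.insert a x).insert b y := by
  by_cases hab : a = b
  · subst hab
    simp only [Finmap.insert_insert]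
  · rw [Finmap.insert_insert_of_ne _ (Ne.symm hab), Finmap.insert_insert, Finmap.insert_insert]

theorem ite_ite_eq_ite_of_idem {α : Type*} (P : α → Prop) [DecidablePred P] {g : α → α}
    (hg : ∀ a, g (g a) = g a) (a : α) :
    (if P (if P a then g a else a) then g (if P a then g a else a)
      else if P a then g a else a) = if P a then g a else a := by
  by_cases ha : P a <;> simp [ha, hg]

namespace Finset

variable {α β : Type*} [DecidableEq α] [DecidableEq β]

theorem image_image_of_idem {f : α → α} (hf : ∀ a, f (f a) = f a) (s : Finset α) :
    (s.image f).image f = s.image f := by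
  rw [image_image]
  exact image_congr fun a _ => hf a

theorem image_sdiff_union_image_of_comp_eq {f : α → β} {g : α → α} {s t : Finset α}
    (hts : t ⊆ s) (h : Set.EqOn (f ∘ g) f t) :
    (s \ t ∪ t.image g).image f = s.image f := by
  rw [image_union, image_image, image_congr h, ← image_union, sdiff_union_of_subset hts]

end Finset

theorem guarded_add_recovers_from_interruption
    {Kind Id PName PVal : Type}
    [DecidableEq Kind] [DecidableEq Id] [DecidableEq PName] [DecidableEq PVal]
    (c : Kind) (n ver : PName) (v : PVal) (ι : ℕ → PVal) (k : ℕ)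
    (upd : (Kind × Id) × Finmap (fun _ : PName => PVal) →
           (Kind × Id) × Finmap (fun _ : PName => PVal))
    (hupd : ∀ p, upd p = (p.1, (p.2.insert n v).insert ver (ι (k + 1))))
    (M : Finset ((Kind × Id) × Finmap (fun _ : PName => PVal)) →
         Finset ((Kind × Id) × Finmap (fun _ : PName => PVal)))
    (hM : ∀ s, M s = s.image (fun p =>
      if p.1.1 = c ∧ p.2.lookup ver = some (ι k) then upd p else p)) :
    ∀ ds : Finset ((Kind × Id) × Finmap (fun _ : PName => PVal)),
      (∀ p ∈ ds, ∀ q ∈ ds, p.1 = q.1 → p = q) →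
      (∀ p ∈ ds, ∃ m : ℕ, p.2.lookup ver = some (ι m)) →
      (∀ S ⊆ ds, (∀ p ∈ S, p.1.1 = c ∧ p.2.lookup ver = some (ι k)) →
        M ((ds \ S) ∪ S.image upd) = M ds) ∧
      M (M ds) = M ds := by
  intro ds _ _
  set step := fun p : (Kind × Id) × Finmap (fun _ : PName => PVal) =>
    if p.1.1 = c ∧ p.2.lookup ver = some (ι k) then upd p else p
  have upd_idem : ∀ p, upd (upd p) = upd p := fun p => by
    rw [hupd (upd p), hupd p, Finmap.insert_insert_insert_insert]
  have step_idem : ∀ p, step (step p) = step p :=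
    ite_ite_eq_ite_of_idem (fun p => p.1.1 = c ∧ p.2.lookup ver = some (ι k)) upd_idem
  refine ⟨fun S hS hqual => ?_, by rw [hM, hM, Finset.image_image_of_idem step_idem]⟩
  have step_upd : Set.EqOn (step ∘ upd) step S := fun p hp => by
    have hstep : step p = upd p := if_pos (hqual p hp)
    rw [Function.comp_apply, ← hstep, step_idem]
  rw [hM, hM, Finset.image_sdiff_union_image_of_comp_eq hS step_upd]
end
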